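/- Let T₁, …, Tₙ be i.i.d. real-valued random variables with common law μ, independent of a real-valued random variable t. Define the Monte Carlo p-value pₙ = (1 + Σ_{i=1}^n 1{Tᵢ ≥ t})/(n+1). If t has law μ as well (i.e., under the null hypothesis) and μ is atomless, then for every α ∈ (0,1), P(pₙ ≤ α) ≤ α; that is, pₙ is a valid p-value. -/

import Mathlib

/-!
Write `upperRank x j = #{i | x j ≤ x i}`, so that the p-value is `upperRank X 0 / (n+1)`.
For every `x`, at most `m` indices `j` have `upperRank x j ≤ m`: they all lie in
`{i | x j₀ ≤ x i}` for the one among them, `j₀`, carrying the smallest value.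
The joint law of `(X 0, …, X n)` is exchangeable, so every index has the same probability of
`upperRank ≤ m`, and `(n+1) P(upperRank X 0 ≤ m) = E #{j | upperRank X j ≤ m} ≤ m`;
take `m = ⌊α(n+1)⌋`.
-/

open MeasureTheory ProbabilityTheory Finset
open scoped ENNReal

namespace MonteCarlo

section Rank

variable {ι α : Type*} [Fintype ι] [LinearOrder α]

def upperRank (x : ι → α) (j : ι) : ℕ := #{i | x j ≤ x i}

theorem card_filter_upperRank_le (x : ι → α) (m : ℕ) : #{j | upperRank x j ≤ m} ≤ m := by
  set S := ({j | upperRank x j ≤ m} : Finset ι)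
  rcases S.eq_empty_or_nonempty with hS | hS
  · simp [hS]
  obtain ⟨j, hjS, hjmin⟩ := S.exists_min_image x hS
  calc #S ≤ upperRank x j := card_le_card fun i hi => mem_filter.2 ⟨mem_univ i, hjmin i hi⟩
    _ ≤ m := (mem_filter.1 hjS).2

theorem upperRank_comp_perm (x : ι → α) (σ : Equiv.Perm ι) (j : ι) :
    upperRank (x ∘ σ) j = upperRank x (σ j) :=
  card_equiv σ fun i => by simp

theorem upperRank_fin_zero {n : ℕ} (x : Fin (n + 1) → α) :
    upperRank x 0 = 1 + #{i : Fin n | x 0 ≤ x i.succ} := by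
  simp only [upperRank, card_filter, Fin.sum_univ_succ, le_refl, if_true]

end Rank

def Exchangeable {ι α : Type*} [MeasurableSpace α] (ν : Measure (ι → α)) : Prop :=
  ∀ σ : Equiv.Perm ι, MeasurePreserving (fun x => x ∘ σ) ν ν

theorem exchangeable_pi {ι α : Type*} [Fintype ι] [MeasurableSpace α] (μ : Measure α)
    [SigmaFinite μ] : Exchangeable (Measure.pi fun _ : ι => μ) := by
  intro σ
  have hmeas : Measurable fun x : ι → α => x ∘ σ :=
    measurable_pi_lambda _ fun i => measurable_pi_apply (σ i)
  refine ⟨hmeas, (Measure.pi_eq fun s hs => ?_).symm⟩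
  rw [Measure.map_apply hmeas (.univ_pi hs)]
  have hpre :
      (fun x : ι → α => x ∘ σ) ⁻¹' Set.univ.pi s = Set.univ.pi fun i => s (σ.symm i) := by
    ext x
    simp only [Set.mem_preimage, Set.mem_univ_pi, Function.comp_apply]
    exact ⟨fun h i => by simpa using h (σ.symm i), fun h i => by simpa using h (σ i)⟩
  rw [hpre, Measure.pi_pi]
  exact σ.symm.prod_comp fun i => μ (s i)

section Exchangeable

variable {ι α : Type*} [Fintype ι] [LinearOrder α] [TopologicalSpace α] [OrderClosedTopology α]
  [SecondCountableTopology α] [MeasurableSpace α] [OpensMeasurableSpace α]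

theorem measurableSet_upperRank_le (j : ι) (m : ℕ) :
    MeasurableSet {x : ι → α | upperRank x j ≤ m} := by
  have : Measurable fun x : ι → α => upperRank x j := by
    simp only [upperRank, card_filter]
    exact Finset.measurable_sum _ fun i _ =>
      Measurable.ite (measurableSet_le (measurable_pi_apply j) (measurable_pi_apply i))
        measurable_const measurable_const
  exact this measurableSet_Iic

theorem Exchangeable.measure_upperRank_le_eq {ν : Measure (ι → α)} (hν : Exchangeable ν)
    (σ : Equiv.Perm ι) (j : ι) (m : ℕ) :
    ν {x | upperRank x (σ j) ≤ m} = ν {x | upperRank x j ≤ m} := by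
  simpa only [Set.preimage_ofPred_eq, upperRank_comp_perm] using
    (hν σ).measure_preimage (measurableSet_upperRank_le j m).nullMeasurableSet

theorem Exchangeable.card_mul_measure_upperRank_le {ν : Measure (ι → α)}
    (hν : Exchangeable ν) (j : ι) (m : ℕ) :
    Fintype.card ι * ν {x | upperRank x j ≤ m} ≤ m * ν Set.univ := by
  classical
  calc (Fintype.card ι : ℝ≥0∞) * ν {x | upperRank x j ≤ m}
      = ∑ k, ν {x | upperRank x k ≤ m} := by
        rw [← Finset.card_univ, ← nsmul_eq_mul, ← Finset.sum_const]
        refine Finset.sum_congr rfl fun k _ => ?_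
        simpa using (hν.measure_upperRank_le_eq (Equiv.swap j k) j m).symm
    _ = ∫⁻ x, ∑ k, {x | upperRank x k ≤ m}.indicator 1 x ∂ν := by
        rw [lintegral_finsetSum _ fun k _ =>
          measurable_one.indicator (measurableSet_upperRank_le k m)]
        simp_rw [lintegral_indicator_one (measurableSet_upperRank_le _ m)]
    _ ≤ ∫⁻ _, m ∂ν := lintegral_mono fun x => by
        simp only [Set.indicator_apply, Set.mem_ofPred_eq, Pi.one_apply, Finset.sum_boole]
        exact_mod_cast card_filter_upperRank_le x m
    _ = m * ν Set.univ := lintegral_const _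

theorem Exchangeable.measure_upperRank_div_le {ν : Measure (ι → α)} [IsProbabilityMeasure ν]
    (hν : Exchangeable ν) (j : ι) {a : ℝ} (ha : 0 ≤ a) :
    ν {x | (upperRank x j : ℝ) / Fintype.card ι ≤ a} ≤ ENNReal.ofReal a := by
  have hcard : 0 < Fintype.card ι := Fintype.card_pos_iff.2 ⟨j⟩
  set m := ⌊a * Fintype.card ι⌋₊
  have hsub : {x : ι → α | (upperRank x j : ℝ) / Fintype.card ι ≤ a} ⊆
      {x | upperRank x j ≤ m} := fun x hx => by
    rw [Set.mem_ofPred_eq, div_le_iff₀ (by exact_mod_cast hcard)] at hx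
    exact Nat.le_floor hx
  have hm : (m : ℝ≥0∞) ≤ ENNReal.ofReal a * Fintype.card ι := by
    calc (m : ℝ≥0∞) = ENNReal.ofReal m := (ENNReal.ofReal_natCast m).symm
      _ ≤ ENNReal.ofReal (a * Fintype.card ι) :=
        ENNReal.ofReal_le_ofReal (Nat.floor_le (by positivity))
      _ = ENNReal.ofReal a * Fintype.card ι := by
        rw [ENNReal.ofReal_mul ha, ENNReal.ofReal_natCast]
  have hbound := hν.card_mul_measure_upperRank_le j m
  rw [measure_univ, mul_one, mul_comm] at hbound
  calc ν _ ≤ ν {x | upperRank x j ≤ m} := measure_mono hsub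
    _ ≤ m / Fintype.card ι :=
      (ENNReal.le_div_iff_mul_le (by simp [hcard.ne']) (by simp)).2 hbound
    _ ≤ ENNReal.ofReal a := ENNReal.div_le_of_le_mul hm

end Exchangeable

end MonteCarlo

open MonteCarlo

theorem monteCarlo_pvalue_valid_general {Ω : Type*} [MeasurableSpace Ω]
    (P : Measure Ω)
    (n : ℕ) (X : Fin (n+1) → Ω → ℝ) (hmeas : ∀ i, Measurable (X i))
    (hindep : iIndepFun X P)
    (μ : Measure ℝ) [IsProbabilityMeasure μ]
    (hlaw : ∀ i, Measure.map (X i) P = μ)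
    (α : ℝ) (hα : α ∈ Set.Ioo (0:ℝ) 1) :
    P {ω | (1 + ((Finset.univ.filter
          (fun i : Fin n => X 0 ω ≤ X i.succ ω)).card : ℝ)) / (n+1) ≤ α}
      ≤ ENNReal.ofReal α := by
  have hX : Measurable fun ω i => X i ω := measurable_pi_lambda _ hmeas
  have hjoint : P.map (fun ω i => X i ω) = Measure.pi fun _ => μ := by
    simp only [hindep.map_fun_eq_pi_map fun i => (hmeas i).aemeasurable, hlaw]
  have hevent : {ω | (1 + ((Finset.univ.filter
        (fun i : Fin n => X 0 ω ≤ X i.succ ω)).card : ℝ)) / (n+1) ≤ α} =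
      (fun ω i => X i ω) ⁻¹'
        {x | (upperRank x 0 : ℝ) / Fintype.card (Fin (n + 1)) ≤ α} := by
    ext ω
    simp [upperRank_fin_zero]
  rw [hevent]
  calc P ((fun ω i => X i ω) ⁻¹' _) ≤ P.map (fun ω i => X i ω) _ :=
        Measure.le_map_apply hX.aemeasurable _
    _ ≤ ENNReal.ofReal α := hjoint ▸ (exchangeable_pi μ).measure_upperRank_div_le 0 hα.1.le

/-- Validity of the Monte Carlo p-value: if `X 0` (the observed statistic `t`) and
`X 1, …, X n` (the simulated statistics `T₁, …, Tₙ`) are i.i.d. with common atomless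
law `μ`, then the Monte Carlo p-value `pₙ = (1 + #{i : Tᵢ ≥ t})/(n+1)` satisfies
`P(pₙ ≤ α) ≤ α` for every `α ∈ (0,1)`. -/
theorem monteCarlo_pvalue_valid {Ω : Type*} [MeasurableSpace Ω]
    (P : Measure Ω) [IsProbabilityMeasure P]
    (n : ℕ) (X : Fin (n+1) → Ω → ℝ) (hmeas : ∀ i, Measurable (X i))
    (hindep : iIndepFun X P)
    (μ : Measure ℝ) [IsProbabilityMeasure μ] [NullSingletonClass μ]
    (hlaw : ∀ i, Measure.map (X i) P = μ)
    (α : ℝ) (hα : α ∈ Set.Ioo (0:ℝ) 1) :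
    P {ω | (1 + ((Finset.univ.filter
          (fun i : Fin n => X 0 ω ≤ X i.succ ω)).card : ℝ)) / (n+1) ≤ α}
      ≤ ENNReal.ofReal α :=
  monteCarlo_pvalue_valid_general P n X hmeas hindep μ hlaw α hα
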